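/- arXiv:0811.1003 — 3 statements merged into one kernel-verified Lean document; each statement's English description precedes it below -/
import Mathlib

section
/- If x : [0,∞) → ℝ^{P(F)} is differentiable with x'(t) = v(x(t)) for all t ≥ 0, then for all t ≥ 0 one has Σ_{A ⊆ F} x^A(t) = Σ_{A ⊆ F} x^A(0) + t · Σ_{A ⊆ F} α^A − δ ∫₀ᵗ x^F(s) ds; in particular, in the closed conservative case (α ≡ 0 and δ = 0) the total mass Σ_{A ⊆ F} x^A(t) is constant in t. -/
/-!
Each gain term of `v` is a loss term in disguise: a peer in state `B` gives a chunk
`a ∈ B \ C` to a peer in state `C`, producing `A = insert a C`, and the factor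
`1 / (1 + #(B \ A)) = 1 / #(B \ C)` averages over the chunks it could have given. Reindexing
`(A, a) ↦ (A.erase a, a)` therefore turns the total download (resp. swap) gain into the total
download (resp. swap) loss, so `∑_A v^A(x) = ∑_A α^A - δ x^F`, and the fundamental theorem
of calculus gives the balance.
-/

open Finset

/-- The fluid vector field `v` of the BitTorrent model, with components indexed by
subsets `A ⊆ F` (the full file `F` being `Finset.univ` of the chunk type `ι`). -/
noncomputable def vfield {ι : Type*} [Fintype ι] [DecidableEq ι]
    (α : Finset ι → ℝ) (β γ δ : ℝ) (x : Finset ι → ℝ) (A : Finset ι) : ℝ :=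
  α A
    - x A * (β * (∑ B ∈ univ.filter (fun B => A ⊂ B), x B)
             + γ * (∑ B ∈ univ.filter (fun B => ¬ A ⊆ B ∧ ¬ B ⊆ A), x B))
    + β * ∑ B ∈ univ.filter (fun B => A ⊆ B),
        (∑ a ∈ A, x (A.erase a)) * x B / (1 + ((B \ A).card : ℝ))
    + γ * ∑ B ∈ univ.filter (fun B => ¬ A ⊆ B),
        (∑ a ∈ A ∩ B, x (A.erase a)) * x B / (1 + ((B \ A).card : ℝ))
    - δ * x univ * (if A = univ then 1 else 0)

theorem eq_add_mul_sub_mul_integral_of_hasDerivAt {f g : ℝ → ℝ} {c δ t : ℝ} (ht : 0 ≤ t)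
    (hf : ∀ s ∈ Set.Icc 0 t, HasDerivAt f (c - δ * g s) s)
    (hg : ContinuousOn g (Set.Icc 0 t)) :
    f t = f 0 + t * c - δ * ∫ s in (0 : ℝ)..t, g s := by
  rw [← Set.uIcc_of_le ht] at hf hg
  have hint := (hg.intervalIntegrable (μ := MeasureTheory.volume)).const_mul δ
  have hftc := intervalIntegral.integral_eq_sub_of_hasDerivAt hf
    (intervalIntegrable_const.sub hint)
  rw [intervalIntegral.integral_sub intervalIntegrable_const hint,
    intervalIntegral.integral_const_mul, intervalIntegral.integral_const, smul_eq_mul,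
    sub_zero] at hftc
  linarith

section

variable {ι : Type*} [DecidableEq ι]

theorem Finset.sum_sum_inter_eq_sum_sum_sdiff [Fintype ι] {M : Type*} [AddCommMonoid M]
    (B : Finset ι) (f : Finset ι → ι → M) :
    ∑ A, ∑ a ∈ A ∩ B, f A a = ∑ C, ∑ a ∈ B \ C, f (insert a C) a := by
  rw [sum_sigma', sum_sigma']
  refine sum_nbij' (fun q => ⟨q.1.erase q.2, q.2⟩) (fun q => ⟨insert q.2 q.1, q.2⟩)
    ?_ ?_ ?_ ?_ ?_ <;> rintro ⟨A, a⟩ h <;> simp_all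

theorem Finset.one_add_card_sdiff_insert {B C : Finset ι} {a : ι} (ha : a ∈ B \ C) :
    1 + (#(B \ insert a C) : ℝ) = #(B \ C) := by
  rw [sdiff_insert, add_comm]
  exact_mod_cast card_erase_add_one ha

omit [DecidableEq ι] in
theorem Finset.sum_div_card_self {K : Type*} [Semifield K] [CharZero K]
    (s : Finset ι) (c : K) :
    ∑ _a ∈ s, c / #s = if s.Nonempty then c else 0 := by
  split_ifs with hs
  · rw [sum_const, nsmul_eq_mul, mul_div_cancel₀ _ (by exact_mod_cast hs.card_ne_zero)]
  · simp [not_nonempty_iff_eq_empty.mp hs]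

variable [Fintype ι]

theorem sum_sum_gain_eq_sum_sum_loss (x : Finset ι → ℝ) (q : Finset ι → Finset ι → Prop)
    [DecidableRel q] (hq : ∀ A B a, a ∈ B \ A → (q (insert a A) B ↔ q A B)) :
    ∑ A, ∑ B ∈ univ.filter (q A), (∑ a ∈ A ∩ B, x (A.erase a)) * x B / (1 + (#(B \ A) : ℝ))
      = ∑ A, x A * ∑ B ∈ univ.filter (fun B => q A B ∧ ¬ B ⊆ A), x B := by
  have hgain (B : Finset ι) : ∑ A, ∑ a ∈ A ∩ B,
        (if q A B then x (A.erase a) * x B / (1 + (#(B \ A) : ℝ)) else 0)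
      = ∑ A, if q A B ∧ ¬ B ⊆ A then x A * x B else 0 := by
    rw [sum_sum_inter_eq_sum_sum_sdiff]
    refine sum_congr rfl fun C _ => ?_
    have hterm : ∀ a ∈ B \ C, (if q (insert a C) B then
          x ((insert a C).erase a) * x B / (1 + (#(B \ insert a C) : ℝ)) else 0)
        = (if q C B then x C * x B else 0) / #(B \ C) := by
      intro a ha
      simp only [hq C B a ha, one_add_card_sdiff_insert ha, erase_insert (mem_sdiff.1 ha).2]
      split_ifs <;> simp
    simp only [sum_congr rfl hterm, sum_div_card_self, sdiff_nonempty]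
    split_ifs <;> simp_all
  calc _ = ∑ B, ∑ A, ∑ a ∈ A ∩ B,
        (if q A B then x (A.erase a) * x B / (1 + (#(B \ A) : ℝ)) else 0) := by
        rw [sum_comm]
        simp_rw [sum_filter, sum_mul, sum_div]
        refine sum_congr rfl fun A _ => sum_congr rfl fun B _ => ?_
        split_ifs <;> simp
    _ = _ := by
        simp_rw [hgain, mul_sum, sum_filter]
        exact sum_comm

theorem sum_vfield (α : Finset ι → ℝ) (β γ δ : ℝ) (x : Finset ι → ℝ) :
    ∑ A, vfield α β γ δ x A = ∑ A, α A - δ * x univ := by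
  have hdownload := sum_sum_gain_eq_sum_sum_loss x (· ⊆ ·) fun A B a ha => by
    simp [insert_subset_iff, (mem_sdiff.1 ha).1]
  have hswap := sum_sum_gain_eq_sum_sum_loss x (¬ · ⊆ ·) fun A B a ha => by
    simp [insert_subset_iff, (mem_sdiff.1 ha).1]
  simp only [← ssubset_iff_subset_not_subset] at hdownload
  have hdownload' : ∑ A, ∑ B ∈ univ.filter (A ⊆ ·),
      (∑ a ∈ A, x (A.erase a)) * x B / (1 + (#(B \ A) : ℝ))
        = ∑ A, x A * ∑ B ∈ univ.filter (A ⊂ ·), x B := by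
    rw [← hdownload]
    refine sum_congr rfl fun A _ => sum_congr rfl fun B hB => ?_
    rw [inter_eq_left.2 (mem_filter.1 hB).2]
  simp only [vfield, sum_add_distrib, sum_sub_distrib, mul_add, mul_left_comm (x _),
    ← mul_sum, hdownload', hswap, mul_ite, mul_one, mul_zero, sum_ite_eq', mem_univ, if_true]
  ring

end

theorem total_mass_balance_general
    {ι : Type*} [Fintype ι] [DecidableEq ι]
    (α : Finset ι → ℝ)
    (β γ δ : ℝ)
    (x : ℝ → Finset ι → ℝ)
    (hx : ∀ t : ℝ, 0 ≤ t → HasDerivAt x (vfield α β γ δ (x t)) t) :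
    (∀ t : ℝ, 0 ≤ t →
      ∑ A : Finset ι, x t A
        = (∑ A : Finset ι, x 0 A) + t * (∑ A : Finset ι, α A)
            - δ * ∫ s in (0 : ℝ)..t, x s univ) ∧
    ((∀ A : Finset ι, α A = 0) → δ = 0 →
      ∀ t : ℝ, 0 ≤ t → ∑ A : Finset ι, x t A = ∑ A : Finset ι, x 0 A) := by
  have balance (t : ℝ) (ht : 0 ≤ t) : ∑ A, x t A
      = ∑ A, x 0 A + t * ∑ A, α A - δ * ∫ s in (0 : ℝ)..t, x s univ := by
    refine eq_add_mul_sub_mul_integral_of_hasDerivAt (f := fun u => ∑ A, x u A) ht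
      (fun s hs => ?_) fun s hs => ?_
    · rw [← sum_vfield α β γ δ]
      exact HasDerivAt.fun_sum fun A _ => hasDerivAt_pi.1 (hx s hs.1) A
    · exact ((continuous_apply univ).continuousAt.comp (hx s hs.1).continuousAt).continuousWithinAt
  refine ⟨balance, fun hα hδ t ht => ?_⟩
  simpa [hα, hδ] using balance t ht

/-- Mass balance along trajectories of the fluid ODE:
`Σ_A x^A(t) = Σ_A x^A(0) + t Σ_A α^A − δ ∫₀ᵗ x^F(s) ds`; in particular in the closed
conservative case (`α ≡ 0`, `δ = 0`) the total mass is constant. -/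
theorem total_mass_balance
    {ι : Type*} [Fintype ι] [Nonempty ι] [DecidableEq ι]
    (α : Finset ι → ℝ) (hα : ∀ A, 0 ≤ α A)
    (β γ δ : ℝ) (hβ : 0 < β) (hγ : 0 ≤ γ) (hδ : 0 ≤ δ)
    (x : ℝ → Finset ι → ℝ)
    (hx : ∀ t : ℝ, 0 ≤ t → HasDerivAt x (vfield α β γ δ (x t)) t) :
    (∀ t : ℝ, 0 ≤ t →
      ∑ A : Finset ι, x t A
        = (∑ A : Finset ι, x 0 A) + t * (∑ A : Finset ι, α A)
            - δ * ∫ s in (0 : ℝ)..t, x s univ) ∧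
    ((∀ A : Finset ι, α A = 0) → δ = 0 →
      ∀ t : ℝ, 0 ≤ t → ∑ A : Finset ι, x t A = ∑ A : Finset ι, x 0 A) :=
  total_mass_balance_general α β γ δ x hx
end

section
/- For every x ∈ ℝ^{P(F)} and every G ⊆ F: Σ_{A',B,B' ⊆ F} μ_{G,B}(x) D(G,A',B,B') = γ x^G Σ_{B : B ≁ G} x^B. -/
open Finset

/-- Swap rate `μ_{A,B}(x)`: nonzero only when `A ≁ B` (neither contains the other). -/
noncomputable def mu {ι : Type*} [DecidableEq ι]
    (γ : ℝ) (x : Finset ι → ℝ) (A B : Finset ι) : ℝ :=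
  if ¬ A ⊆ B ∧ ¬ B ⊆ A then
    γ * x A * x B / (((A \ B).card : ℝ) * ((B \ A).card : ℝ))
  else 0

/-- The indicator `D(A,A',B,B') = 1(A ⊏ A', A'\A ⊆ B, B ⊏ B', B'\B ⊆ A)`. -/
def Dind {ι : Type*} [DecidableEq ι] (A A' B B' : Finset ι) : ℝ :=
  if A ⊆ A' ∧ (A' \ A).card = 1 ∧ A' \ A ⊆ B ∧ B ⊆ B' ∧ (B' \ B).card = 1 ∧ B' \ B ⊆ A
  then 1 else 0

/-!
Summing `D(G, A', B, B')` over `A'` and `B'` counts the covers `A' = G ∪ {a}` with `a ∈ B \ G`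
and `B' = B ∪ {b}` with `b ∈ G \ B`, so it equals `|B \ G| · |G \ B|`. This product is exactly
the denominator of `μ_{G,B}(x)`, which is nonzero precisely when `B ≁ G`.
-/

namespace Finset

variable {ι : Type*} [Fintype ι] [DecidableEq ι]

theorem card_filter_covBy_sdiff_subset (G C : Finset ι) :
    #({A | G ⊆ A ∧ #(A \ G) = 1 ∧ A \ G ⊆ C} : Finset (Finset ι)) = #(C \ G) := by
  have hcovers : ({A | G ⊆ A ∧ #(A \ G) = 1 ∧ A \ G ⊆ C} : Finset (Finset ι)) =
      (C \ G).image (insert · G) := by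
    ext A
    simp only [mem_filter, mem_univ, true_and, mem_image, mem_sdiff, ← and_assoc,
      ← covBy_iff_card_sdiff_eq_one, covBy_iff_exists_insert]
    constructor
    · rintro ⟨⟨a, haG, rfl⟩, hC⟩
      exact ⟨a, ⟨by simpa [insert_sdiff_cancel haG] using hC, haG⟩, rfl⟩
    · rintro ⟨a, ⟨haC, haG⟩, rfl⟩
      exact ⟨⟨a, haG, rfl⟩, by simpa [insert_sdiff_cancel haG]⟩
  rw [hcovers, card_image_of_injOn]
  intro a ha b _ hab
  exact (insert_inj (mem_sdiff.mp ha).2).mp hab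

end Finset

section

variable {ι : Type*} [DecidableEq ι]

theorem Dind_eq_mul (A A' B B' : Finset ι) :
    Dind A A' B B' =
      (if A ⊆ A' ∧ #(A' \ A) = 1 ∧ A' \ A ⊆ B then 1 else 0) *
        (if B ⊆ B' ∧ #(B' \ B) = 1 ∧ B' \ B ⊆ A then 1 else 0) := by
  rw [Dind, ite_zero_mul_ite_zero, mul_one]
  simp only [and_assoc]

theorem mu_mul_card_sdiff_mul_card_sdiff (γ : ℝ) (x : Finset ι → ℝ) (A B : Finset ι) :
    mu γ x A B * ((#(B \ A) : ℝ) * #(A \ B)) =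
      if ¬ B ⊆ A ∧ ¬ A ⊆ B then γ * x A * x B else 0 := by
  rw [mu]
  split_ifs with h
  · have hAB : (#(A \ B) : ℝ) ≠ 0 := by simpa using h.1
    have hBA : (#(B \ A) : ℝ) ≠ 0 := by simpa using h.2
    rw [mul_comm (#(B \ A) : ℝ), div_mul_cancel₀ _ (mul_ne_zero hAB hBA)]
  · exact absurd h.symm ‹_›
  · exact absurd ‹_ ∧ _›.symm h
  · rw [zero_mul]

variable [Fintype ι]

theorem sum_sum_Dind (A B : Finset ι) :
    ∑ A', ∑ B', Dind A A' B B' = (#(B \ A) : ℝ) * #(A \ B) := by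
  simp only [Dind_eq_mul, ← mul_sum, ← sum_mul, sum_boole, card_filter_covBy_sdiff_subset]

end

theorem sum_mu_from_general
    {ι : Type*} [Fintype ι] [DecidableEq ι]
    (γ : ℝ) (x : Finset ι → ℝ) (G : Finset ι) :
    ∑ A' : Finset ι, ∑ B : Finset ι, ∑ B' : Finset ι, mu γ x G B * Dind G A' B B'
      = γ * x G * ∑ B ∈ univ.filter (fun B => ¬ B ⊆ G ∧ ¬ G ⊆ B), x B := by
  rw [sum_comm, mul_sum, sum_filter]
  refine sum_congr rfl fun B _ => ?_
  rw [← mu_mul_card_sdiff_mul_card_sdiff, ← sum_sum_Dind]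
  simp only [mul_sum]

/-- `Σ_{A',B,B'} μ_{G,B}(x) D(G,A',B,B') = γ x^G Σ_{B ≁ G} x^B`. -/
theorem sum_mu_from
    {ι : Type*} [Fintype ι] [Nonempty ι] [DecidableEq ι]
    (γ : ℝ) (hγ : 0 ≤ γ) (x : Finset ι → ℝ) (G : Finset ι) :
    ∑ A' : Finset ι, ∑ B : Finset ι, ∑ B' : Finset ι, mu γ x G B * Dind G A' B B'
      = γ * x G * ∑ B ∈ univ.filter (fun B => ¬ B ⊆ G ∧ ¬ G ⊆ B), x B :=
  sum_mu_from_general γ x G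
end

section
/- For every x ∈ ℝ^{P(F)} and every G ⊆ F: Σ_{A,B,B' ⊆ F} μ_{A,B}(x) D(A,G,B,B') = γ Σ_{B : G ⊄ B} (x^B/(|B\G| + 1)) · Σ_{g ∈ G∩B} x^{G\{g}}. -/
open Finset

/-!
For fixed `B`, the summand is nonzero only when `A = G \ {g}` with `g ∈ G ∩ B` and
`B' = B ∪ {b}` with `b ∈ A \ B`. Summing over `B'` therefore multiplies `μ_{A,B}` by `|A \ B|`,
which cancels that factor of its denominator, and `|B \ (G \ {g})| = |B \ G| + 1`.
If `G ⊆ B` every such `A` lies inside `B`, so `μ_{A,B} = 0`.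
-/

namespace Finset

variable {ι : Type*} [DecidableEq ι]

theorem subset_card_sdiff_eq_one_sdiff_subset_iff_exists_insert {A A' C : Finset ι} :
    A ⊆ A' ∧ #(A' \ A) = 1 ∧ A' \ A ⊆ C ↔ ∃ a ∈ C \ A, insert a A = A' := by
  constructor
  · rintro ⟨hAA', hcard, hC⟩
    obtain ⟨a, ha⟩ := card_eq_one.mp hcard
    have haA' : a ∈ A' \ A := ha ▸ mem_singleton_self a
    refine ⟨a, mem_sdiff.mpr ⟨hC haA', (mem_sdiff.mp haA').2⟩, ?_⟩
    rw [insert_eq, ← ha, sdiff_union_of_subset hAA']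
  · rintro ⟨a, ha, rfl⟩
    have haA := (mem_sdiff.mp ha).2
    rw [insert_sdiff_cancel haA]
    exact ⟨subset_insert a A, card_singleton a, singleton_subset_iff.mpr (mem_sdiff.mp ha).1⟩

theorem subset_card_sdiff_eq_one_sdiff_subset_iff_exists_erase {A G C : Finset ι} :
    A ⊆ G ∧ #(G \ A) = 1 ∧ G \ A ⊆ C ↔ ∃ g ∈ G ∩ C, G.erase g = A := by
  constructor
  · rintro ⟨hAG, hcard, hC⟩
    obtain ⟨g, hg⟩ := card_eq_one.mp hcard
    have hgG : g ∈ G \ A := hg ▸ mem_singleton_self g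
    refine ⟨g, mem_inter.mpr ⟨(mem_sdiff.mp hgG).1, hC hgG⟩, ?_⟩
    rw [← sdiff_singleton_eq_erase, ← hg, sdiff_sdiff_eq_self hAG]
  · rintro ⟨g, hg, rfl⟩
    have hgG := (mem_inter.mp hg).1
    rw [sdiff_erase_self hgG]
    exact ⟨erase_subset g G, card_singleton g, singleton_subset_iff.mpr (mem_inter.mp hg).2⟩

variable [Fintype ι]

theorem card_filter_subset_card_sdiff_eq_one_sdiff_subset (A C : Finset ι) :
    #{A' | A ⊆ A' ∧ #(A' \ A) = 1 ∧ A' \ A ⊆ C} = #(C \ A) := by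
  have himage : ({A' | A ⊆ A' ∧ #(A' \ A) = 1 ∧ A' \ A ⊆ C} : Finset (Finset ι))
      = (C \ A).image (insert · A) := by
    ext A'
    simp only [mem_filter, mem_univ, true_and, mem_image,
      subset_card_sdiff_eq_one_sdiff_subset_iff_exists_insert]
  rw [himage, card_image_of_injOn]
  exact (insert_inj_on A).mono fun a ha => (mem_sdiff.mp ha).2

theorem filter_subset_card_sdiff_eq_one_sdiff_subset_eq_image_erase (G C : Finset ι) :
    ({A | A ⊆ G ∧ #(G \ A) = 1 ∧ G \ A ⊆ C} : Finset (Finset ι))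
      = (G ∩ C).image G.erase := by
  ext A
  simp only [mem_filter, mem_univ, true_and, mem_image,
    subset_card_sdiff_eq_one_sdiff_subset_iff_exists_erase]

end Finset

section

variable {ι : Type*} [DecidableEq ι]

theorem sum_Dind [Fintype ι] (A G B : Finset ι) :
    ∑ B' : Finset ι, Dind A G B B'
      = if A ⊆ G ∧ #(G \ A) = 1 ∧ G \ A ⊆ B then (#(A \ B) : ℝ) else 0 := by
  split_ifs with hA
  · simp only [Dind, hA, true_and]
    rw [sum_boole, card_filter_subset_card_sdiff_eq_one_sdiff_subset]
  · exact sum_eq_zero fun B' _ => if_neg fun h => hA ⟨h.1, h.2.1, h.2.2.1⟩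

theorem mu_erase_mul_card_sdiff (γ : ℝ) (x : Finset ι → ℝ) {G B : Finset ι} {g : ι}
    (hg : g ∈ G ∩ B) :
    mu γ x (G.erase g) B * #(G.erase g \ B)
      = if G ⊆ B then 0 else γ * x (G.erase g) * x B / (#(B \ G) + 1) := by
  obtain ⟨hgG, hgB⟩ := mem_inter.mp hg
  split_ifs with hGB
  · rw [sdiff_eq_empty_iff_subset.mpr ((erase_subset g G).trans hGB)]
    simp
  obtain ⟨a, haG, haB⟩ := not_subset.mp hGB
  have ha : a ∈ G.erase g \ B :=
    mem_sdiff.mpr ⟨mem_erase.mpr ⟨(ne_of_mem_of_not_mem hgB haB).symm, haG⟩, haB⟩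
  have hnAB : ¬ G.erase g ⊆ B := fun h => (mem_sdiff.mp ha).2 (h (mem_sdiff.mp ha).1)
  have hnBA : ¬ B ⊆ G.erase g := fun h => (mem_erase.mp (h hgB)).1 rfl
  have hcard : (#(B \ G.erase g) : ℝ) = #(B \ G) + 1 := by
    rw [sdiff_erase hgB, card_insert_of_notMem fun h => (mem_sdiff.mp h).2 hgG]
    push_cast
    ring
  have hAB : (#(G.erase g \ B) : ℝ) ≠ 0 := Nat.cast_ne_zero.mpr (card_ne_zero_of_mem ha)
  rw [mu, if_pos ⟨hnAB, hnBA⟩, hcard]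
  field_simp

end

theorem sum_mu_into_general
    {ι : Type*} [Fintype ι] [DecidableEq ι]
    (γ : ℝ) (x : Finset ι → ℝ) (G : Finset ι) :
    ∑ A : Finset ι, ∑ B : Finset ι, ∑ B' : Finset ι, mu γ x A B * Dind A G B B'
      = γ * ∑ B ∈ univ.filter (fun B => ¬ G ⊆ B),
          (x B / (((B \ G).card : ℝ) + 1)) * ∑ g ∈ G ∩ B, x (G.erase g) := by
  rw [sum_comm, sum_filter, mul_sum]
  refine sum_congr rfl fun B _ => ?_
  calc ∑ A : Finset ι, ∑ B' : Finset ι, mu γ x A B * Dind A G B B'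
      = ∑ A : Finset ι with A ⊆ G ∧ #(G \ A) = 1 ∧ G \ A ⊆ B,
          mu γ x A B * #(A \ B) := by
        simp only [← mul_sum, sum_Dind, mul_ite, mul_zero, sum_ite, sum_const_zero, add_zero]
    _ = ∑ g ∈ G ∩ B, mu γ x (G.erase g) B * #(G.erase g \ B) := by
        rw [filter_subset_card_sdiff_eq_one_sdiff_subset_eq_image_erase,
          sum_image ((erase_injOn G).mono inter_subset_left)]
    _ = ∑ g ∈ G ∩ B,
          if G ⊆ B then (0 : ℝ) else γ * x (G.erase g) * x B / (#(B \ G) + 1) :=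
        sum_congr rfl fun g hg => mu_erase_mul_card_sdiff γ x hg
    _ = _ := by
        by_cases hGB : G ⊆ B
        · simp [hGB]
        · simp only [hGB, if_false, not_false_eq_true, if_true, mul_sum]
          exact sum_congr rfl fun g _ => by ring

/-- `Σ_{A,B,B'} μ_{A,B}(x) D(A,G,B,B') = γ Σ_{B : G ⊄ B} (x^B/(|B\G|+1)) Σ_{g ∈ G∩B} x^{G\{g}}`. -/
theorem sum_mu_into
    {ι : Type*} [Fintype ι] [Nonempty ι] [DecidableEq ι]
    (γ : ℝ) (hγ : 0 ≤ γ) (x : Finset ι → ℝ) (G : Finset ι) :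
    ∑ A : Finset ι, ∑ B : Finset ι, ∑ B' : Finset ι, mu γ x A B * Dind A G B B'
      = γ * ∑ B ∈ univ.filter (fun B => ¬ G ⊆ B),
          (x B / (((B \ G).card : ℝ) + 1)) * ∑ g ∈ G ∩ B, x (G.erase g) :=
  sum_mu_into_general γ x G
end
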